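/- arXiv:1805.08382 — 13 statements merged into one kernel-verified Lean document; each statement's English description precedes it below -/
import Mathlib

section
/- Let I(x₁,x₂) = ½a₁x₁² + a₂x₁x₂ + ½a₃x₂² + a₄x₁ + a₅x₂, and set D₁ = a₁a₃ − a₂², D₂ = 2a₂a₄a₅ − a₃a₄² − a₁a₅². Suppose (x₁', x₂') satisfy the discretization x₁' − x₁ = h(B·∂I/∂x₂(x₁',x₂') + C·∂I/∂x₂(x₁,x₂)) and x₂' − x₂ = −h(B·∂I/∂x₁(x₁',x₂') + C·∂I/∂x₁(x₁,x₂)) for real numbers B, C, h. Then (1 + h²D₁B²)·(I(x₁',x₂') − D₂/(2D₁)) = (1 + h²D₁C²)·(I(x₁,x₂) − D₂/(2D₁)), provided D₁ ≠ 0. -/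
/-!
Translating the origin to the critical point `c` of `I` (which exists since `D₁ ≠ 0`) turns
`I − D₂/(2D₁)` into the quadratic form `Q y = ½ yᵀ A y` and the gradient into `A y`, so the scheme
reads `y' − hB·JA y' = y + hC·JA y` with `J` the symplectic rotation. Since `AJA` is skew and
`(JA)ᵀ A (JA) = D₁ A`, one has `Q (y + t·JA y) = (1 + t²D₁) Q y` for every `t`; evaluating `Q` on
both sides of the scheme gives the identity.
-/

noncomputable section

variable (a1 a2 a3 a4 a5 : ℝ)

def quadForm (y1 y2 : ℝ) : ℝ :=
  a1 / 2 * y1 ^ 2 + a2 * y1 * y2 + a3 / 2 * y2 ^ 2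

def center₁ : ℝ := (a2 * a5 - a3 * a4) / (a1 * a3 - a2 ^ 2)

def center₂ : ℝ := (a2 * a4 - a1 * a5) / (a1 * a3 - a2 ^ 2)

theorem quadForm_add_smul_hamiltonian (t y1 y2 : ℝ) :
    quadForm a1 a2 a3 (y1 + t * (a2 * y1 + a3 * y2)) (y2 - t * (a1 * y1 + a2 * y2)) =
      (1 + t ^ 2 * (a1 * a3 - a2 ^ 2)) * quadForm a1 a2 a3 y1 y2 := by
  unfold quadForm
  ring

variable {a1 a2 a3 a4 a5}

theorem quadratic_sub_criticalValue_eq_quadForm (hD : a1 * a3 - a2 ^ 2 ≠ 0) (x1 x2 : ℝ) :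
    a1 / 2 * x1 ^ 2 + a2 * x1 * x2 + a3 / 2 * x2 ^ 2 + a4 * x1 + a5 * x2
        - (2 * a2 * a4 * a5 - a3 * a4 ^ 2 - a1 * a5 ^ 2) / (2 * (a1 * a3 - a2 ^ 2)) =
      quadForm a1 a2 a3 (x1 - center₁ a1 a2 a3 a4 a5) (x2 - center₂ a1 a2 a3 a4 a5) := by
  unfold quadForm center₁ center₂
  field_simp
  ring

theorem grad₁_center (hD : a1 * a3 - a2 ^ 2 ≠ 0) :
    a1 * center₁ a1 a2 a3 a4 a5 + a2 * center₂ a1 a2 a3 a4 a5 + a4 = 0 := by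
  unfold center₁ center₂
  rw [div_eq_mul_inv, div_eq_mul_inv]
  linear_combination (-a4) * mul_inv_cancel₀ hD

theorem grad₂_center (hD : a1 * a3 - a2 ^ 2 ≠ 0) :
    a2 * center₁ a1 a2 a3 a4 a5 + a3 * center₂ a1 a2 a3 a4 a5 + a5 = 0 := by
  unfold center₁ center₂
  rw [div_eq_mul_inv, div_eq_mul_inv]
  linear_combination (-a5) * mul_inv_cancel₀ hD

theorem grad₁_eq_sub_center (hD : a1 * a3 - a2 ^ 2 ≠ 0) (x1 x2 : ℝ) :
    a1 * x1 + a2 * x2 + a4 =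
      a1 * (x1 - center₁ a1 a2 a3 a4 a5) + a2 * (x2 - center₂ a1 a2 a3 a4 a5) := by
  linear_combination grad₁_center hD

theorem grad₂_eq_sub_center (hD : a1 * a3 - a2 ^ 2 ≠ 0) (x1 x2 : ℝ) :
    a2 * x1 + a3 * x2 + a5 =
      a2 * (x1 - center₁ a1 a2 a3 a4 a5) + a3 * (x2 - center₂ a1 a2 a3 a4 a5) := by
  linear_combination grad₂_center hD

end

/-- Kahan-type discretization of a planar system with quadratic integral
`I(x₁,x₂) = ½a₁x₁² + a₂x₁x₂ + ½a₃x₂² + a₄x₁ + a₅x₂` satisfies the key identity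
`(1 + h²D₁B²)(I' − D₂/(2D₁)) = (1 + h²D₁C²)(I − D₂/(2D₁))` when `D₁ ≠ 0`. -/
theorem kahan_two_var_identity
    (a1 a2 a3 a4 a5 h B C x1 x2 x1' x2' : ℝ)
    (hD1 : a1 * a3 - a2 ^ 2 ≠ 0)
    (heq1 : x1' - x1 =
      h * (B * (a2 * x1' + a3 * x2' + a5) + C * (a2 * x1 + a3 * x2 + a5)))
    (heq2 : x2' - x2 =
      -(h * (B * (a1 * x1' + a2 * x2' + a4) + C * (a1 * x1 + a2 * x2 + a4)))) :
    (1 + h ^ 2 * (a1 * a3 - a2 ^ 2) * B ^ 2) *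
        ((a1 / 2 * x1' ^ 2 + a2 * x1' * x2' + a3 / 2 * x2' ^ 2 + a4 * x1' + a5 * x2')
          - (2 * a2 * a4 * a5 - a3 * a4 ^ 2 - a1 * a5 ^ 2) / (2 * (a1 * a3 - a2 ^ 2)))
      = (1 + h ^ 2 * (a1 * a3 - a2 ^ 2) * C ^ 2) *
        ((a1 / 2 * x1 ^ 2 + a2 * x1 * x2 + a3 / 2 * x2 ^ 2 + a4 * x1 + a5 * x2)
          - (2 * a2 * a4 * a5 - a3 * a4 ^ 2 - a1 * a5 ^ 2) / (2 * (a1 * a3 - a2 ^ 2))) := by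
  rw [grad₁_eq_sub_center hD1, grad₁_eq_sub_center hD1] at heq2
  rw [grad₂_eq_sub_center hD1, grad₂_eq_sub_center hD1] at heq1
  rw [quadratic_sub_criticalValue_eq_quadForm hD1, quadratic_sub_criticalValue_eq_quadForm hD1]
  set y1 := x1 - center₁ a1 a2 a3 a4 a5
  set y2 := x2 - center₂ a1 a2 a3 a4 a5
  set y1' := x1' - center₁ a1 a2 a3 a4 a5
  set y2' := x2' - center₂ a1 a2 a3 a4 a5
  have hstep1 : y1' + -(h * B) * (a2 * y1' + a3 * y2') = y1 + h * C * (a2 * y1 + a3 * y2) := by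
    linear_combination heq1
  have hstep2 : y2' - -(h * B) * (a1 * y1' + a2 * y2') = y2 - h * C * (a1 * y1 + a2 * y2) := by
    linear_combination heq2
  calc (1 + h ^ 2 * (a1 * a3 - a2 ^ 2) * B ^ 2) * quadForm a1 a2 a3 y1' y2'
      = quadForm a1 a2 a3 (y1' + -(h * B) * (a2 * y1' + a3 * y2'))
          (y2' - -(h * B) * (a1 * y1' + a2 * y2')) := by
        rw [quadForm_add_smul_hamiltonian]; ring
    _ = quadForm a1 a2 a3 (y1 + h * C * (a2 * y1 + a3 * y2))
          (y2 - h * C * (a1 * y1 + a2 * y2)) := by rw [hstep1, hstep2]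
    _ = (1 + h ^ 2 * (a1 * a3 - a2 ^ 2) * C ^ 2) * quadForm a1 a2 a3 y1 y2 := by
        rw [quadForm_add_smul_hamiltonian]; ring
end

section
/- With I, D₁, D₂ as above (no assumption D₁ ≠ 0), if x₁' − x₁ = h(B·I₂' + C·I₂) and x₂' − x₂ = −h(B·I₁' + C·I₁) where Iᵢ', Iᵢ denote the partial derivatives of I at (x₁',x₂') and (x₁,x₂) respectively, then (1 + h²D₁B²)·I(x₁',x₂') − ½h²D₂B² = (1 + h²D₁C²)·I(x₁,x₂) − ½h²D₂C². -/
/-!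
`I` is quadratic, so `I(x') − I(x) = ½ (∇I(x) + ∇I(x')) · (x' − x)` exactly, and the step makes
`x' − x = h J (B ∇I(x') + C ∇I(x))` with `J` the rotation by `−π/2`. Writing `g, g'` for the two
gradients and `ω` for the area form, the right-hand side collapses to `½ h (B − C) ω(g, g')`. On
the other hand `g' − g = A (x' − x)` for the Hessian `A`, and `JᵀAJ = adj A`, so
`(B − C) ω(g, g') = −h (B²Q(g') − C²Q(g))` where `Q(g) = gᵀ (adj A) g`. Finally the adjugate
identity `D₁ I − ½ D₂ = ½ Q(∇I)` holds as a polynomial identity.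
-/

namespace KahanTwoVar

variable {K : Type*} [Field K]

/-- The coefficients of `I(x₁,x₂) = ½a₁x₁² + a₂x₁x₂ + ½a₃x₂² + a₄x₁ + a₅x₂`. -/
structure Coeffs (K : Type*) where
  a1 : K
  a2 : K
  a3 : K
  a4 : K
  a5 : K

def dot (u v : K × K) : K := u.1 * v.1 + u.2 * v.2

def wedge (u v : K × K) : K := u.1 * v.2 - u.2 * v.1

/-- The quarter turn `J`, so that the step reads `x' − x = h • rot (B • g' + C • g)`. -/
def rot (v : K × K) : K × K := (v.2, -v.1)

theorem dot_smul_rot (p v : K × K) (h : K) : dot p (h • rot v) = h * wedge p v := by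
  simp only [dot, rot, wedge, Prod.smul_fst, Prod.smul_snd, smul_eq_mul]
  ring

theorem wedge_smul_left (t : K) (u v : K × K) : wedge (t • u) v = t * wedge u v := by
  simp only [wedge, Prod.smul_fst, Prod.smul_snd, smul_eq_mul]
  ring

theorem wedge_add_smul_add_smul (g g' : K × K) (B C : K) :
    wedge (g + g') (B • g' + C • g) = (B - C) * wedge g g' := by
  simp only [wedge, Prod.fst_add, Prod.snd_add, Prod.smul_fst, Prod.smul_snd, smul_eq_mul]
  ring

theorem wedge_sub_smul_sub_smul (g g' : K × K) (B C : K) :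
    wedge (g' - g) (B • g' - C • g) = -((B - C) * wedge g g') := by
  simp only [wedge, Prod.fst_sub, Prod.snd_sub, Prod.smul_fst, Prod.smul_snd, smul_eq_mul]
  ring

namespace Coeffs

variable (c : Coeffs K)

def I (x : K × K) : K :=
  c.a1 / 2 * x.1 ^ 2 + c.a2 * x.1 * x.2 + c.a3 / 2 * x.2 ^ 2 + c.a4 * x.1 + c.a5 * x.2

def grad (x : K × K) : K × K :=
  (c.a1 * x.1 + c.a2 * x.2 + c.a4, c.a2 * x.1 + c.a3 * x.2 + c.a5)

def hessMul (v : K × K) : K × K :=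
  (c.a1 * v.1 + c.a2 * v.2, c.a2 * v.1 + c.a3 * v.2)

/-- The bilinear form of the adjugate `[[a₃, −a₂], [−a₂, a₁]]` of the Hessian. -/
def adjForm (u v : K × K) : K :=
  c.a3 * u.1 * v.1 - c.a2 * (u.1 * v.2 + u.2 * v.1) + c.a1 * u.2 * v.2

def D₁ : K := c.a1 * c.a3 - c.a2 ^ 2

def D₂ : K := 2 * c.a2 * c.a4 * c.a5 - c.a3 * c.a4 ^ 2 - c.a1 * c.a5 ^ 2

theorem grad_sub_grad (x y : K × K) : c.grad y - c.grad x = c.hessMul (y - x) := by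
  ext <;> simp only [grad, hessMul, Prod.fst_sub, Prod.snd_sub] <;> ring

theorem hessMul_smul (t : K) (v : K × K) : c.hessMul (t • v) = t • c.hessMul v := by
  ext <;> simp only [hessMul, Prod.smul_fst, Prod.smul_snd, smul_eq_mul] <;> ring

/-- `JᵀAJ = adj A` for a symmetric `2 × 2` matrix `A`. -/
theorem wedge_hessMul_rot (u v : K × K) : wedge (c.hessMul (rot u)) v = c.adjForm u v := by
  simp only [wedge, hessMul, rot, adjForm]
  ring

theorem adjForm_add_sub (u v : K × K) :
    c.adjForm (u + v) (u - v) = c.adjForm u u - c.adjForm v v := by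
  simp only [adjForm, Prod.fst_add, Prod.snd_add, Prod.fst_sub, Prod.snd_sub]
  ring

theorem adjForm_smul_smul (s t : K) (u v : K × K) :
    c.adjForm (s • u) (t • v) = s * t * c.adjForm u v := by
  simp only [adjForm, Prod.smul_fst, Prod.smul_snd, smul_eq_mul]
  ring

theorem dot_grad_add_of_step {h B C : K} {x y : K × K}
    (hstep : y - x = h • rot (B • c.grad y + C • c.grad x)) :
    dot (c.grad x + c.grad y) (y - x) =
      h ^ 2 * (C ^ 2 * c.adjForm (c.grad x) (c.grad x)
        - B ^ 2 * c.adjForm (c.grad y) (c.grad y)) := by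
  set g := c.grad x
  set g' := c.grad y
  have hrot : (B - C) * wedge g g' = -(h * c.adjForm (B • g' + C • g) (B • g' - C • g)) :=
    calc (B - C) * wedge g g' = -wedge (g' - g) (B • g' - C • g) := by
          rw [wedge_sub_smul_sub_smul, neg_neg]
      _ = -wedge (c.hessMul (y - x)) (B • g' - C • g) := by rw [grad_sub_grad]
      _ = -(h * c.adjForm (B • g' + C • g) (B • g' - C • g)) := by
          rw [hstep, hessMul_smul, wedge_smul_left, wedge_hessMul_rot]
  rw [hstep, dot_smul_rot, wedge_add_smul_add_smul, hrot, adjForm_add_sub, adjForm_smul_smul,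
    adjForm_smul_smul]
  ring

variable [CharZero K]

theorem I_sub_I (x y : K × K) : c.I y - c.I x = dot (c.grad x + c.grad y) (y - x) / 2 := by
  simp only [I, grad, dot, Prod.fst_add, Prod.snd_add, Prod.fst_sub, Prod.snd_sub]
  ring

theorem D₁_mul_I_sub_D₂ (x : K × K) :
    c.D₁ * c.I x - c.D₂ / 2 = c.adjForm (c.grad x) (c.grad x) / 2 := by
  simp only [D₁, D₂, I, grad, adjForm]
  ring

theorem I_step_modified_energy {h B C : K} {x y : K × K}
    (hstep : y - x = h • rot (B • c.grad y + C • c.grad x)) :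
    (1 + h ^ 2 * c.D₁ * B ^ 2) * c.I y - 1 / 2 * h ^ 2 * c.D₂ * B ^ 2 =
      (1 + h ^ 2 * c.D₁ * C ^ 2) * c.I x - 1 / 2 * h ^ 2 * c.D₂ * C ^ 2 := by
  linear_combination c.I_sub_I x y + c.dot_grad_add_of_step hstep / 2
    + h ^ 2 * B ^ 2 * c.D₁_mul_I_sub_D₂ y - h ^ 2 * C ^ 2 * c.D₁_mul_I_sub_D₂ x

end Coeffs

end KahanTwoVar

/-- The polynomial form of the discretization identity, valid without assuming `D₁ ≠ 0`:
`(1 + h²D₁B²)·I(x₁',x₂') − ½h²D₂B² = (1 + h²D₁C²)·I(x₁,x₂) − ½h²D₂C²`. -/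
theorem kahan_two_var_identity_polynomial
    (a1 a2 a3 a4 a5 h B C x1 x2 x1' x2' : ℝ)
    (heq1 : x1' - x1 =
      h * (B * (a2 * x1' + a3 * x2' + a5) + C * (a2 * x1 + a3 * x2 + a5)))
    (heq2 : x2' - x2 =
      -(h * (B * (a1 * x1' + a2 * x2' + a4) + C * (a1 * x1 + a2 * x2 + a4)))) :
    (1 + h ^ 2 * (a1 * a3 - a2 ^ 2) * B ^ 2) *
        (a1 / 2 * x1' ^ 2 + a2 * x1' * x2' + a3 / 2 * x2' ^ 2 + a4 * x1' + a5 * x2')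
      - 1 / 2 * h ^ 2 * (2 * a2 * a4 * a5 - a3 * a4 ^ 2 - a1 * a5 ^ 2) * B ^ 2
      = (1 + h ^ 2 * (a1 * a3 - a2 ^ 2) * C ^ 2) *
          (a1 / 2 * x1 ^ 2 + a2 * x1 * x2 + a3 / 2 * x2 ^ 2 + a4 * x1 + a5 * x2)
        - 1 / 2 * h ^ 2 * (2 * a2 * a4 * a5 - a3 * a4 ^ 2 - a1 * a5 ^ 2) * C ^ 2 := by
  refine KahanTwoVar.Coeffs.I_step_modified_energy ⟨a1, a2, a3, a4, a5⟩
    (x := (x1, x2)) (y := (x1', x2')) ?_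
  ext <;> simp only [KahanTwoVar.rot, KahanTwoVar.Coeffs.grad, Prod.mk_sub_mk, Prod.smul_mk,
    Prod.mk_add_mk, smul_eq_mul]
  · linear_combination heq1
  · linear_combination heq2
end

section
/- Under the discretization x₁' − x₁ = hB(I₂' + I₂), x₂' − x₂ = −hB(I₁' + I₁) (i.e. equal weights B = C, the discrete gradient case), the quadratic I(x₁,x₂) = ½a₁x₁² + a₂x₁x₂ + ½a₃x₂² + a₄x₁ + a₅x₂ is exactly preserved: I(x₁',x₂') = I(x₁,x₂). -/
/-! For a quadratic `I`, the increment `I(x') - I(x)` equals the mean gradient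
`(∇I(x') + ∇I(x)) / 2` paired with the step `x' - x`. The scheme moves `x` along that
mean gradient rotated by a right angle, so the pairing vanishes. -/

theorem quadratic_sub_eq_mean_gradient_dot (a1 a2 a3 a4 a5 x1 x2 x1' x2' : ℝ) :
    (a1 / 2 * x1' ^ 2 + a2 * x1' * x2' + a3 / 2 * x2' ^ 2 + a4 * x1' + a5 * x2')
      - (a1 / 2 * x1 ^ 2 + a2 * x1 * x2 + a3 / 2 * x2 ^ 2 + a4 * x1 + a5 * x2)
      = ((a1 * x1' + a2 * x2' + a4) + (a1 * x1 + a2 * x2 + a4)) / 2 * (x1' - x1)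
        + ((a2 * x1' + a3 * x2' + a5) + (a2 * x1 + a3 * x2 + a5)) / 2 * (x2' - x2) := by
  ring

/-- Discrete gradient case (equal weights `B = C`): the quadratic integral `I`
is exactly preserved. -/
theorem discrete_gradient_preserves_quadratic
    (a1 a2 a3 a4 a5 h B x1 x2 x1' x2' : ℝ)
    (heq1 : x1' - x1 =
      h * B * ((a2 * x1' + a3 * x2' + a5) + (a2 * x1 + a3 * x2 + a5)))
    (heq2 : x2' - x2 =
      -(h * B * ((a1 * x1' + a2 * x2' + a4) + (a1 * x1 + a2 * x2 + a4)))) :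
    a1 / 2 * x1' ^ 2 + a2 * x1' * x2' + a3 / 2 * x2' ^ 2 + a4 * x1' + a5 * x2'
      = a1 / 2 * x1 ^ 2 + a2 * x1 * x2 + a3 / 2 * x2 ^ 2 + a4 * x1 + a5 * x2 := by
  have h_increment := quadratic_sub_eq_mean_gradient_dot a1 a2 a3 a4 a5 x1 x2 x1' x2'
  rw [heq1, heq2] at h_increment
  linear_combination h_increment
end

section
/- Consider the 2D Suslov system x₁' = 2αx₁x₂, x₂' = −2x₁². Its Kahan discretization (u − x₁)/h = α(u x₂ + x₁ v), (v − x₂)/h = −2 x₁ u preserves the modified integral Ĩ(x₁,x₂) = (½x₁² + ½αx₂²)/(1 + h²αx₁²); i.e. if (u,v) satisfies the Kahan equations then Ĩ(u,v) = Ĩ(x₁,x₂) whenever both denominators are nonzero. -/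
/-!
Cleared of denominators, conservation of `Ĩ` is a polynomial identity in `x₁, x₂, u, v`, and it
lies in the ideal generated by the two Kahan equations: the difference of the cross products is
`½(u + x₁ + hα(ux₂ − x₁v))` times the first equation plus `½α(v + x₂)` times the second.
-/

theorem suslov_kahan_modified_integral_cross_mul
    (α h x1 x2 u v : ℝ)
    (heq1 : u - x1 = h * (α * (u * x2 + x1 * v)))
    (heq2 : v - x2 = -(h * (2 * x1 * u))) :
    (1 / 2 * u ^ 2 + 1 / 2 * α * v ^ 2) * (1 + h ^ 2 * α * x1 ^ 2)
      = (1 / 2 * x1 ^ 2 + 1 / 2 * α * x2 ^ 2) * (1 + h ^ 2 * α * u ^ 2) := by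
  linear_combination (1 / 2 * (u + x1 + h * α * (u * x2 - x1 * v))) * heq1
    + (1 / 2 * α * (v + x2)) * heq2

/-- The Kahan discretization of the 2D Suslov system `ẋ₁ = 2αx₁x₂`, `ẋ₂ = −2x₁²`
preserves the modified integral `Ĩ(x₁,x₂) = (½x₁² + ½αx₂²)/(1 + h²αx₁²)`. -/
theorem suslov_kahan_modified_integral
    (α h x1 x2 u v : ℝ)
    (heq1 : u - x1 = h * (α * (u * x2 + x1 * v)))
    (heq2 : v - x2 = -(h * (2 * x1 * u)))
    (hden : 1 + h ^ 2 * α * x1 ^ 2 ≠ 0)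
    (hden' : 1 + h ^ 2 * α * u ^ 2 ≠ 0) :
    (1 / 2 * u ^ 2 + 1 / 2 * α * v ^ 2) / (1 + h ^ 2 * α * u ^ 2)
      = (1 / 2 * x1 ^ 2 + 1 / 2 * α * x2 ^ 2) / (1 + h ^ 2 * α * x1 ^ 2) :=
  (div_eq_div_iff hden' hden).2 (suslov_kahan_modified_integral_cross_mul α h x1 x2 u v heq1 heq2)
end

section
/- Consider the Zhukovsky–Volterra system ẋ₁ = αx₂x₃ − β₂x₃, ẋ₂ = β₁x₃, ẋ₃ = −αx₁x₂ − β₁x₂ + β₂x₁. Its Kahan discretization exactly preserves the polynomial Ĩ(x₁,x₂,x₃) = ½αx₂² − β₁x₁ − β₂x₂ − ⅛h²αβ₁²x₃²: if (x₁',x₂',x₃') is the Kahan update of (x₁,x₂,x₃) with step h, then Ĩ(x₁',x₂',x₃') = Ĩ(x₁,x₂,x₃). -/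
/-!
Only the updates of `x₁` and `x₂` matter. Writing `Δxᵢ = xᵢ' - xᵢ`, the `β₂`-terms of `Ĩ' - Ĩ`
cancel by the `x₂`-update, and the remaining `α`-terms collapse to `¼ h α β₁ Δx₂ Δx₃`;
using the `x₂`-update once more turns this into `⅛ h² α β₁² (x₃'² - x₃²)`, which is exactly
what the correction term `-⅛ h² α β₁² x₃²` of `Ĩ` removes.
-/

section ZhukovskyVolterraKahan

variable {K : Type*} [Field K] [CharZero K]

def zhukovskyVolterraModifiedIntegral (α β1 β2 h x1 x2 x3 : K) : K :=
  1 / 2 * α * x2 ^ 2 - β1 * x1 - β2 * x2 - 1 / 8 * h ^ 2 * α * β1 ^ 2 * x3 ^ 2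

theorem zhukovskyVolterraModifiedIntegral_eq_of_kahan_step
    (α β1 β2 h x1 x2 x3 x1' x2' x3' : K)
    (step1 : x1' - x1 = h * (α * (x2' * x3 + x2 * x3') / 2 - β2 * (x3 + x3') / 2))
    (step2 : x2' - x2 = h * (β1 * (x3 + x3') / 2)) :
    zhukovskyVolterraModifiedIntegral α β1 β2 h x1' x2' x3' =
      zhukovskyVolterraModifiedIntegral α β1 β2 h x1 x2 x3 := by
  unfold zhukovskyVolterraModifiedIntegral
  linear_combination (-β1) * step1 +
    (α * (x2' + x2) / 2 - β2 - α * h * β1 * (x3 - x3') / 4) * step2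

end ZhukovskyVolterraKahan

theorem zhukovsky_volterra_kahan_modified_integral_general
    (α β1 β2 h x1 x2 x3 x1' x2' x3' : ℝ)
    (heq1 : (x1' - x1) / h = α * (x2' * x3 + x2 * x3') / 2 - β2 * (x3 + x3') / 2)
    (heq2 : (x2' - x2) / h = β1 * (x3 + x3') / 2)
    (hh : h ≠ 0) :
    1 / 2 * α * x2' ^ 2 - β1 * x1' - β2 * x2' - 1 / 8 * h ^ 2 * α * β1 ^ 2 * x3' ^ 2
      = 1 / 2 * α * x2 ^ 2 - β1 * x1 - β2 * x2 - 1 / 8 * h ^ 2 * α * β1 ^ 2 * x3 ^ 2 := by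
  exact zhukovskyVolterraModifiedIntegral_eq_of_kahan_step α β1 β2 h x1 x2 x3 x1' x2' x3'
    (by rw [(div_eq_iff hh).mp heq1, mul_comm]) (by rw [(div_eq_iff hh).mp heq2, mul_comm])

/-- The Kahan discretization of the Zhukovsky–Volterra system with `β₃ = 0` preserves
the modified integral `Ĩ = ½αx₂² − β₁x₁ − β₂x₂ − ⅛h²αβ₁²x₃²`. -/
theorem zhukovsky_volterra_kahan_modified_integral
    (α β1 β2 h x1 x2 x3 x1' x2' x3' : ℝ)
    (heq1 : (x1' - x1) / h = α * (x2' * x3 + x2 * x3') / 2 - β2 * (x3 + x3') / 2)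
    (heq2 : (x2' - x2) / h = β1 * (x3 + x3') / 2)
    (heq3 : (x3' - x3) / h =
      -(α * (x1' * x2 + x1 * x2') / 2) - β1 * (x2 + x2') / 2 + β2 * (x1 + x1') / 2)
    (hh : h ≠ 0) :
    1 / 2 * α * x2' ^ 2 - β1 * x1' - β2 * x2' - 1 / 8 * h ^ 2 * α * β1 ^ 2 * x3' ^ 2
      = 1 / 2 * α * x2 ^ 2 - β1 * x1 - β2 * x2 - 1 / 8 * h ^ 2 * α * β1 ^ 2 * x3 ^ 2 :=
  zhukovsky_volterra_kahan_modified_integral_general α β1 β2 h x1 x2 x3 x1' x2' x3' heq1 heq2 hh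
end

section
/- The Kahan discretization of the Euler-top-like system ẋ₁ = α₁x₂x₃, ẋ₂ = α₂x₃x₁ (as part of a larger system where x₃' is unconstrained) preserves the modified integral Ĩ₁(x₁,x₂,x₃) = (½α₁x₂² − ½α₂x₁²)/(1 − (h²/4)α₁α₂x₃²): if (x₁'−x₁)/h = α₁(x₂'x₃+x₂x₃')/2 and (x₂'−x₂)/h = α₂(x₃'x₁+x₃x₁')/2, then Ĩ₁(x₁',x₂',x₃') = Ĩ₁(x₁,x₂,x₃), assuming both denominators are nonzero. -/
/-!
The two Kahan equations say `S(x₃) x' = S(-x₃') x` for the shear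
`S(t) (u₁, u₂) = (u₁ - (hα₁t/2) u₂, u₂ - (hα₂t/2) u₁)`. The shear multiplies the quadratic
form `q(u) = ½α₁u₂² - ½α₂u₁²` by its own determinant `D(t) = 1 - (h/2)²α₁α₂t²`, so applying
`q` to both sides gives `D(x₃) q(x') = D(x₃') q(x)`, and `Ĩ₁ = q / D`.
-/

section KahanEulerTop

variable {K : Type*} [Field K]

def eulerTopQuadForm (α1 α2 u1 u2 : K) : K := 1 / 2 * α1 * u2 ^ 2 - 1 / 2 * α2 * u1 ^ 2

def kahanShearDet (α1 α2 h t : K) : K := 1 - (h / 2) ^ 2 * α1 * α2 * t ^ 2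

theorem kahanShearDet_neg (α1 α2 h t : K) :
    kahanShearDet α1 α2 h (-t) = kahanShearDet α1 α2 h t := by
  simp only [kahanShearDet, neg_sq]

theorem eulerTopQuadForm_shear (α1 α2 h t u1 u2 : K) :
    eulerTopQuadForm α1 α2 (u1 - h * α1 * t / 2 * u2) (u2 - h * α2 * t / 2 * u1)
      = kahanShearDet α1 α2 h t * eulerTopQuadForm α1 α2 u1 u2 := by
  simp only [eulerTopQuadForm, kahanShearDet]
  ring

theorem kahanShearDet_mul_eulerTopQuadForm_eq {α1 α2 h x1 x2 x3 x1' x2' x3' : K}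
    (heq1 : x1' - x1 = h * (α1 * (x2' * x3 + x2 * x3') / 2))
    (heq2 : x2' - x2 = h * (α2 * (x3' * x1 + x3 * x1') / 2)) :
    kahanShearDet α1 α2 h x3 * eulerTopQuadForm α1 α2 x1' x2'
      = kahanShearDet α1 α2 h x3' * eulerTopQuadForm α1 α2 x1 x2 := by
  have hshear1 : x1' - h * α1 * x3 / 2 * x2' = x1 - h * α1 * (-x3') / 2 * x2 := by
    linear_combination heq1
  have hshear2 : x2' - h * α2 * x3 / 2 * x1' = x2 - h * α2 * (-x3') / 2 * x1 := by
    linear_combination heq2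
  rw [← eulerTopQuadForm_shear, hshear1, hshear2, eulerTopQuadForm_shear, kahanShearDet_neg]

end KahanEulerTop

/-- Euler-top-like subsystem: the two Kahan-discretized equations for `x₁, x₂` alone
imply preservation of `Ĩ₁ = (½α₁x₂² − ½α₂x₁²)/(1 − (h²/4)α₁α₂x₃²)`. -/
theorem euler_top_kahan_modified_integral
    (α1 α2 h x1 x2 x3 x1' x2' x3' : ℝ)
    (heq1 : x1' - x1 = h * (α1 * (x2' * x3 + x2 * x3') / 2))
    (heq2 : x2' - x2 = h * (α2 * (x3' * x1 + x3 * x1') / 2))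
    (hden : 1 - h ^ 2 / 4 * α1 * α2 * x3 ^ 2 ≠ 0)
    (hden' : 1 - h ^ 2 / 4 * α1 * α2 * x3' ^ 2 ≠ 0) :
    (1 / 2 * α1 * x2' ^ 2 - 1 / 2 * α2 * x1' ^ 2) / (1 - h ^ 2 / 4 * α1 * α2 * x3' ^ 2)
      = (1 / 2 * α1 * x2 ^ 2 - 1 / 2 * α2 * x1 ^ 2) / (1 - h ^ 2 / 4 * α1 * α2 * x3 ^ 2) := by
  have hcross := kahanShearDet_mul_eulerTopQuadForm_eq heq1 heq2
  simp only [kahanShearDet, eulerTopQuadForm] at hcross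
  rw [div_eq_div_iff hden' hden]
  linear_combination hcross
end

section
/- For the coupled Euler tops ẋ₁ = α₁x₂x₃, ẋ₂ = α₂x₃x₁, ẋ₃ = α₃x₁x₂ + α₄x₄x₅, ẋ₄ = α₅x₅x₃, ẋ₅ = α₆x₃x₄, under the superintegrability condition α₁α₂ = α₅α₆, the Kahan discretization with step h preserves Ĩ₃ = (½(α₁x₂+α₅x₅)² − ½α₁α₂(x₁+x₄)²)/(1 − (h²/4)α₁α₂x₃²), assuming the denominators at both points are nonzero. -/
/-!
Put `Q = α₁x₂ + α₅x₅`, `S = x₁ + x₄` and `k = α₁α₂ = α₅α₆`. Adding the Kahan equations in pairs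
shows that `(Q, S)` obeys a closed linear Kahan step
`Q' - Q = k (a S' + b S)`, `S' - S = a Q' + b Q` with `a = (h/2) x₃`, `b = (h/2) x₃'`.
Rewritten as `M_a (Q', S') = M_{-b} (Q, S)` with the shear `M_c = [[1, -c k], [-c, 1]]`, it is
preserved up to a scalar by the form `q(Q, S) = Q² - k S²`, since `q ∘ M_c = (1 - k c²) q`.
Hence `(1 - k a²) q(Q', S') = (1 - k b²) q(Q, S)`, which is the invariance of `Ĩ₃ = q / (2 (1 - k a²))`.
-/

section KahanShear

variable {R : Type*} [CommRing R]

theorem shear_sq_sub_mul_sq (k c Q S : R) :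
    (Q - c * k * S) ^ 2 - k * (S - c * Q) ^ 2 = (1 - k * c ^ 2) * (Q ^ 2 - k * S ^ 2) := by
  ring

theorem linear_kahan_step_sq_sub_mul_sq {k a b Q S Q' S' : R}
    (hQ : Q' - Q = k * (a * S' + b * S)) (hS : S' - S = a * Q' + b * Q) :
    (1 - k * a ^ 2) * (Q' ^ 2 - k * S' ^ 2) = (1 - k * b ^ 2) * (Q ^ 2 - k * S ^ 2) := by
  have hQ' : Q' - a * k * S' = Q - (-b) * k * S := by linear_combination hQ
  have hS' : S' - a * Q' = S - (-b) * Q := by linear_combination hS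
  calc (1 - k * a ^ 2) * (Q' ^ 2 - k * S' ^ 2)
      = (Q' - a * k * S') ^ 2 - k * (S' - a * Q') ^ 2 := (shear_sq_sub_mul_sq k a Q' S').symm
    _ = (Q - (-b) * k * S) ^ 2 - k * (S - (-b) * Q) ^ 2 := by rw [hQ', hS']
    _ = (1 - k * b ^ 2) * (Q ^ 2 - k * S ^ 2) := by rw [shear_sq_sub_mul_sq]; ring

end KahanShear

/-- Coupled Euler tops with superintegrability condition `α₁α₂ = α₅α₆`:
the Kahan discretization preserves
`Ĩ₃ = (½(α₁x₂+α₅x₅)² − ½α₁α₂(x₁+x₄)²)/(1 − (h²/4)α₁α₂x₃²)`. -/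
theorem coupled_euler_tops_kahan_third_integral
    (α1 α2 α5 α6 h x1 x2 x3 x4 x5 x1' x2' x3' x4' x5' : ℝ)
    (hsuper : α1 * α2 = α5 * α6)
    (heq1 : x1' - x1 = h * (α1 * (x2' * x3 + x2 * x3') / 2))
    (heq2 : x2' - x2 = h * (α2 * (x3' * x1 + x3 * x1') / 2))
    (heq4 : x4' - x4 = h * (α5 * (x5' * x3 + x5 * x3') / 2))
    (heq5 : x5' - x5 = h * (α6 * (x3' * x4 + x3 * x4') / 2))
    (hden : 1 - h ^ 2 / 4 * α1 * α2 * x3 ^ 2 ≠ 0)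
    (hden' : 1 - h ^ 2 / 4 * α1 * α2 * x3' ^ 2 ≠ 0) :
    (1 / 2 * (α1 * x2' + α5 * x5') ^ 2 - 1 / 2 * α1 * α2 * (x1' + x4') ^ 2)
        / (1 - h ^ 2 / 4 * α1 * α2 * x3' ^ 2)
      = (1 / 2 * (α1 * x2 + α5 * x5) ^ 2 - 1 / 2 * α1 * α2 * (x1 + x4) ^ 2)
        / (1 - h ^ 2 / 4 * α1 * α2 * x3 ^ 2) := by
  have hQ : (α1 * x2' + α5 * x5') - (α1 * x2 + α5 * x5)
      = α1 * α2 * (h / 2 * x3 * (x1' + x4') + h / 2 * x3' * (x1 + x4)) := by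
    linear_combination α1 * heq2 + α5 * heq5 - (h / 2 * (x3' * x4 + x3 * x4')) * hsuper
  have hS : (x1' + x4') - (x1 + x4)
      = h / 2 * x3 * (α1 * x2' + α5 * x5') + h / 2 * x3' * (α1 * x2 + α5 * x5) := by
    linear_combination heq1 + heq4
  rw [div_eq_div_iff hden' hden]
  linear_combination (1 / 2 : ℝ) * linear_kahan_step_sq_sub_mul_sq hQ hS
end

section
/- If the superintegrability condition α₁α₂ = α₅α₆ holds, then from the Kahan-discretized equations for the coupled Euler tops it follows that X := x₁ + x₄ and Y := α₁x₂ + α₅x₅ satisfy the Kahan-type system (X' − X)/h = (Y'x₃ + Yx₃')/2 and (Y' − Y)/h = α₁α₂(x₃'X + x₃X')/2, where X' = x₁' + x₄', Y' = α₁x₂' + α₅x₅'. -/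
/-- Under the superintegrability condition `α₁α₂ = α₅α₆`, the Kahan-discretized
coupled Euler top equations imply that `X = x₁ + x₄` and `Y = α₁x₂ + α₅x₅` satisfy a
Kahan-type system. -/
theorem coupled_euler_tops_reduced_kahan_system
    (α1 α2 α5 α6 h x1 x2 x3 x4 x5 x1' x2' x3' x4' x5' : ℝ)
    (hsuper : α1 * α2 = α5 * α6)
    (heq1 : (x1' - x1) / h = α1 * (x2' * x3 + x2 * x3') / 2)
    (heq2 : (x2' - x2) / h = α2 * (x3' * x1 + x3 * x1') / 2)
    (heq4 : (x4' - x4) / h = α5 * (x5' * x3 + x5 * x3') / 2)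
    (heq5 : (x5' - x5) / h = α6 * (x3' * x4 + x3 * x4') / 2) :
    ((x1' + x4') - (x1 + x4)) / h
        = ((α1 * x2' + α5 * x5') * x3 + (α1 * x2 + α5 * x5) * x3') / 2
      ∧ ((α1 * x2' + α5 * x5') - (α1 * x2 + α5 * x5)) / h
        = α1 * α2 * (x3' * (x1 + x4) + x3 * (x1' + x4')) / 2 := by
  constructor
  · linear_combination heq1 + heq4
  -- α₁·(heq2) + α₅·(heq5) gives the claim with α₅α₆ in front of the x₄-terms; superintegrability
  -- replaces it by α₁α₂.
  · linear_combination α1 * heq2 + α5 * heq5 - ((x3' * x4 + x3 * x4') / 2) * hsuper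
end

section
/- Let H(x,y) = ½a₁x² + a₂xy + ½a₃y² + a₄x + a₅y and K(y,z) = ½b₁y² + b₂yz + ½b₃z² + b₄y + b₅z, with D₁(a) = a₁a₃ − a₂², D₂(a) = 2a₂a₄a₅ − a₃a₄² − a₁a₅². If (x',y',z') is the Kahan update with step h of the Nambu system ẋ = (∂K/∂z)(∂H/∂y), ẏ = −(∂K/∂z)(∂H/∂x), ż = (∂H/∂x)(∂K/∂y), then H̃(x',y',z') = H̃(x,y,z), where H̃(x,y,z) = (H(x,y) + ⅛h²D₂(a)(b₂y+b₃z+b₅)²)/(1 + ¼h²D₁(a)(b₂y+b₃z+b₅)²), assuming both denominators are nonzero. -/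
/-!
Write `u = (x, y)`, `v = ∇H(u) = (p, q)`, `A` for the Hessian of `H` and `J = [[0, 1], [-1, 0]]`.
With `c = K_z(y, z)`, `c' = K_z(y', z')`, `t = hc/2`, `t' = hc'/2` and `s = t v' + t' v`, the
`(x, y)`-part of the Kahan step reads `Δu = J s`, hence `Δv = A J s`.
Since `H` is quadratic, `ΔH = ½ (v + v')ᵀ J s = ½ (t - t') vᵀ J v'`. The modification is the
quadratic form `Q` of `adj A = Jᵀ A J`, because `Q(∇H) = 2 D₁ H - D₂`; by polarization
`Q(t v') - Q(t' v) = (t v' - t' v)ᵀ Jᵀ Δv = (t' - t) vᵀ J v'`, which cancels `ΔH`.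
-/

noncomputable def quadraticH (a1 a2 a3 a4 a5 x y : ℝ) : ℝ :=
  1 / 2 * a1 * x ^ 2 + a2 * x * y + 1 / 2 * a3 * y ^ 2 + a4 * x + a5 * y

/-- The quadratic form of `[[a3, -a2], [-a2, a1]]`, the adjugate of the Hessian of `quadraticH`. -/
def hessianAdjugateForm (a1 a2 a3 p q : ℝ) : ℝ :=
  a3 * p ^ 2 - 2 * a2 * p * q + a1 * q ^ 2

theorem hessianAdjugateForm_gradient (a1 a2 a3 a4 a5 x y : ℝ) :
    hessianAdjugateForm a1 a2 a3 (a1 * x + a2 * y + a4) (a2 * x + a3 * y + a5)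
      = 2 * (a1 * a3 - a2 ^ 2) * quadraticH a1 a2 a3 a4 a5 x y
        - (2 * a2 * a4 * a5 - a3 * a4 ^ 2 - a1 * a5 ^ 2) := by
  unfold hessianAdjugateForm quadraticH
  ring

theorem hessianAdjugateForm_kahan_step (a1 a2 a3 t t' p q p' q' dx dy : ℝ)
    (hdx : dx = t * q' + t' * q) (hdy : dy = -(t * p' + t' * p))
    (hp : p' - p = a1 * dx + a2 * dy) (hq : q' - q = a2 * dx + a3 * dy) :
    (p + p') * dx + (q + q') * dy
      + t ^ 2 * hessianAdjugateForm a1 a2 a3 p' q' - t' ^ 2 * hessianAdjugateForm a1 a2 a3 p q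
      = 0 := by
  unfold hessianAdjugateForm
  subst hdx hdy
  -- `adj A s = Jᵀ Δv`, paired with `t v' - t' v`
  linear_combination (t * p' - t' * p) * hq - (t * q' - t' * q) * hp

theorem kahan_planar_modified_H (a1 a2 a3 a4 a5 h c c' x y x' y' : ℝ)
    (hx : x' - x = h * (c * (a2 * x' + a3 * y' + a5) + c' * (a2 * x + a3 * y + a5)) / 2)
    (hy : y' - y = -(h * (c * (a1 * x' + a2 * y' + a4) + c' * (a1 * x + a2 * y + a4)) / 2)) :
    (quadraticH a1 a2 a3 a4 a5 x' y'
        + 1 / 8 * h ^ 2 * (2 * a2 * a4 * a5 - a3 * a4 ^ 2 - a1 * a5 ^ 2) * c' ^ 2)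
      * (1 + 1 / 4 * h ^ 2 * (a1 * a3 - a2 ^ 2) * c ^ 2)
    = (quadraticH a1 a2 a3 a4 a5 x y
        + 1 / 8 * h ^ 2 * (2 * a2 * a4 * a5 - a3 * a4 ^ 2 - a1 * a5 ^ 2) * c ^ 2)
      * (1 + 1 / 4 * h ^ 2 * (a1 * a3 - a2 ^ 2) * c' ^ 2) := by
  have hstep := hessianAdjugateForm_kahan_step a1 a2 a3 (h * c / 2) (h * c' / 2)
    (a1 * x + a2 * y + a4) (a2 * x + a3 * y + a5) (a1 * x' + a2 * y' + a4) (a2 * x' + a3 * y' + a5)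
    (x' - x) (y' - y) (by rw [hx]; ring) (by rw [hy]; ring) (by ring) (by ring)
  have hQ := hessianAdjugateForm_gradient a1 a2 a3 a4 a5 x y
  have hQ' := hessianAdjugateForm_gradient a1 a2 a3 a4 a5 x' y'
  unfold quadraticH at hQ hQ' ⊢
  linear_combination 1 / 2 * hstep - (h * c / 2) ^ 2 / 2 * hQ' + (h * c' / 2) ^ 2 / 2 * hQ

theorem nambu_kahan_modified_H_general
    (a1 a2 a3 a4 a5 b2 b3 b5 h x y z x' y' z' : ℝ)
    (heq1 : x' - x = h * ((b2 * y + b3 * z + b5) * (a2 * x' + a3 * y' + a5)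
      + (b2 * y' + b3 * z' + b5) * (a2 * x + a3 * y + a5)) / 2)
    (heq2 : y' - y = -(h * ((b2 * y + b3 * z + b5) * (a1 * x' + a2 * y' + a4)
      + (b2 * y' + b3 * z' + b5) * (a1 * x + a2 * y + a4)) / 2))
    (hden : 1 + 1 / 4 * h ^ 2 * (a1 * a3 - a2 ^ 2) * (b2 * y + b3 * z + b5) ^ 2 ≠ 0)
    (hden' : 1 + 1 / 4 * h ^ 2 * (a1 * a3 - a2 ^ 2) * (b2 * y' + b3 * z' + b5) ^ 2 ≠ 0) :
    ((1 / 2 * a1 * x' ^ 2 + a2 * x' * y' + 1 / 2 * a3 * y' ^ 2 + a4 * x' + a5 * y')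
        + 1 / 8 * h ^ 2 * (2 * a2 * a4 * a5 - a3 * a4 ^ 2 - a1 * a5 ^ 2)
          * (b2 * y' + b3 * z' + b5) ^ 2)
      / (1 + 1 / 4 * h ^ 2 * (a1 * a3 - a2 ^ 2) * (b2 * y' + b3 * z' + b5) ^ 2)
    = ((1 / 2 * a1 * x ^ 2 + a2 * x * y + 1 / 2 * a3 * y ^ 2 + a4 * x + a5 * y)
        + 1 / 8 * h ^ 2 * (2 * a2 * a4 * a5 - a3 * a4 ^ 2 - a1 * a5 ^ 2)
          * (b2 * y + b3 * z + b5) ^ 2)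
      / (1 + 1 / 4 * h ^ 2 * (a1 * a3 - a2 ^ 2) * (b2 * y + b3 * z + b5) ^ 2) := by
  rw [div_eq_div_iff hden' hden]
  exact kahan_planar_modified_H a1 a2 a3 a4 a5 h _ _ x y x' y' heq1 heq2

/-- The Kahan discretization of the Nambu system `ẋ = K_z H_y`, `ẏ = −K_z H_x`,
`ż = H_x K_y` (all factors affine, so Kahan = symmetrized products) preserves the
modified integral `H̃ = (H + ⅛h²D₂(a)K_z²)/(1 + ¼h²D₁(a)K_z²)`. -/
theorem nambu_kahan_modified_H
    (a1 a2 a3 a4 a5 b1 b2 b3 b4 b5 h x y z x' y' z' : ℝ)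
    (heq1 : x' - x = h * ((b2 * y + b3 * z + b5) * (a2 * x' + a3 * y' + a5)
      + (b2 * y' + b3 * z' + b5) * (a2 * x + a3 * y + a5)) / 2)
    (heq2 : y' - y = -(h * ((b2 * y + b3 * z + b5) * (a1 * x' + a2 * y' + a4)
      + (b2 * y' + b3 * z' + b5) * (a1 * x + a2 * y + a4)) / 2))
    (heq3 : z' - z = h * ((a1 * x + a2 * y + a4) * (b1 * y' + b2 * z' + b4)
      + (a1 * x' + a2 * y' + a4) * (b1 * y + b2 * z + b4)) / 2)
    (hden : 1 + 1 / 4 * h ^ 2 * (a1 * a3 - a2 ^ 2) * (b2 * y + b3 * z + b5) ^ 2 ≠ 0)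
    (hden' : 1 + 1 / 4 * h ^ 2 * (a1 * a3 - a2 ^ 2) * (b2 * y' + b3 * z' + b5) ^ 2 ≠ 0) :
    ((1 / 2 * a1 * x' ^ 2 + a2 * x' * y' + 1 / 2 * a3 * y' ^ 2 + a4 * x' + a5 * y')
        + 1 / 8 * h ^ 2 * (2 * a2 * a4 * a5 - a3 * a4 ^ 2 - a1 * a5 ^ 2)
          * (b2 * y' + b3 * z' + b5) ^ 2)
      / (1 + 1 / 4 * h ^ 2 * (a1 * a3 - a2 ^ 2) * (b2 * y' + b3 * z' + b5) ^ 2)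
    = ((1 / 2 * a1 * x ^ 2 + a2 * x * y + 1 / 2 * a3 * y ^ 2 + a4 * x + a5 * y)
        + 1 / 8 * h ^ 2 * (2 * a2 * a4 * a5 - a3 * a4 ^ 2 - a1 * a5 ^ 2)
          * (b2 * y + b3 * z + b5) ^ 2)
      / (1 + 1 / 4 * h ^ 2 * (a1 * a3 - a2 ^ 2) * (b2 * y + b3 * z + b5) ^ 2) :=
  nambu_kahan_modified_H_general a1 a2 a3 a4 a5 b2 b3 b5 h x y z x' y' z' heq1 heq2 hden hden'
end

section
/- With H, K as in the Nambu system above and D₁(b) = b₁b₃ − b₂², D₂(b) = 2b₂b₄b₅ − b₃b₄² − b₁b₅², the Kahan discretization with step h also preserves K̃(x,y,z) = (K(y,z) + ⅛h²D₂(b)(a₁x+a₂y+a₄)²)/(1 + ¼h²D₁(b)(a₁x+a₂y+a₄)²): K̃(x',y',z') = K̃(x,y,z), assuming both denominators are nonzero. -/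
/-!
The `(y, z)`-equations of the Kahan step involve `H` only through `p = ∂H/∂x`: they form a
Kahan-type step of `ẏ = -p ∂K/∂z, ż = p ∂K/∂y` with `p` taking the values `p, p'` at the two
endpoints. Writing `w = ∇K`, `Q` for the quadratic form of the adjugate of the Hessian of `K`,
and `Δ = w ∧ w'`, the midpoint rule for quadratics gives `K' - K = h/4 (p' - p) Δ`, while
expressing `Δ` once from each endpoint and eliminating the mixed term gives
`(p' - p) Δ = h/2 (p'² Q(w) - p² Q(w'))`. Since `Q(∇K) = 2 D₁ K - D₂`, this is exactly the
cross-multiplied form of `K̃' = K̃`.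
-/

structure PlanarQuadratic (𝕜 : Type*) where
  (b₁ b₂ b₃ b₄ b₅ : 𝕜)

namespace PlanarQuadratic

variable {𝕜 : Type*} [Field 𝕜] (K : PlanarQuadratic 𝕜)

def eval (y z : 𝕜) : 𝕜 :=
  1 / 2 * K.b₁ * y ^ 2 + K.b₂ * y * z + 1 / 2 * K.b₃ * z ^ 2 + K.b₄ * y + K.b₅ * z

def gradY (y z : 𝕜) : 𝕜 := K.b₁ * y + K.b₂ * z + K.b₄

def gradZ (y z : 𝕜) : 𝕜 := K.b₂ * y + K.b₃ * z + K.b₅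

def D₁ : 𝕜 := K.b₁ * K.b₃ - K.b₂ ^ 2

def D₂ : 𝕜 := 2 * K.b₂ * K.b₄ * K.b₅ - K.b₃ * K.b₄ ^ 2 - K.b₁ * K.b₅ ^ 2

/-- The polar form of the adjugate `[[b₃, -b₂], [-b₂, b₁]]` of the Hessian of `K`, evaluated on
the gradients of `K` at `(y, z)` and `(y', z')`. -/
def adjGrad (y z y' z' : 𝕜) : 𝕜 :=
  K.b₃ * K.gradY y z * K.gradY y' z'
    - K.b₂ * (K.gradY y z * K.gradZ y' z' + K.gradZ y z * K.gradY y' z')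
    + K.b₁ * K.gradZ y z * K.gradZ y' z'

def gradWedge (y z y' z' : 𝕜) : 𝕜 :=
  K.gradY y z * K.gradZ y' z' - K.gradZ y z * K.gradY y' z'

/-- The Kahan step `(y, z) ↦ (y', z')` of `ẏ = -p ∂K/∂z, ż = p ∂K/∂y`, where the factor `p` takes
the value `p` at the old and `p'` at the new point. -/
def IsKahanStep (h p p' y z y' z' : 𝕜) : Prop :=
  y' - y = -(h * (K.gradZ y z * p' + K.gradZ y' z' * p) / 2) ∧
    z' - z = h * (p * K.gradY y' z' + p' * K.gradY y z) / 2

def modifiedEval (h p y z : 𝕜) : 𝕜 :=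
  (K.eval y z + 1 / 8 * h ^ 2 * K.D₂ * p ^ 2) / (1 + 1 / 4 * h ^ 2 * K.D₁ * p ^ 2)

theorem gradY_sub_gradY (y z y' z' : 𝕜) :
    K.gradY y' z' - K.gradY y z = K.b₁ * (y' - y) + K.b₂ * (z' - z) := by
  unfold gradY
  ring

theorem gradZ_sub_gradZ (y z y' z' : 𝕜) :
    K.gradZ y' z' - K.gradZ y z = K.b₂ * (y' - y) + K.b₃ * (z' - z) := by
  unfold gradZ
  ring

variable [CharZero 𝕜]

theorem adjGrad_self (y z : 𝕜) : K.adjGrad y z y z = 2 * K.D₁ * K.eval y z - K.D₂ := by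
  unfold adjGrad gradY gradZ D₁ D₂ eval
  ring

theorem eval_sub_eval (y z y' z' : 𝕜) :
    K.eval y' z' - K.eval y z =
      ((y' - y) * (K.gradY y z + K.gradY y' z')
        + (z' - z) * (K.gradZ y z + K.gradZ y' z')) / 2 := by
  unfold eval gradY gradZ
  ring

variable {K} {h p p' y z y' z' : 𝕜}

namespace IsKahanStep

variable (hs : K.IsKahanStep h p p' y z y' z')
include hs

theorem eval_sub_eval_eq_mul_gradWedge :
    K.eval y' z' - K.eval y z = h / 4 * (p' - p) * K.gradWedge y z y' z' := by
  rw [K.eval_sub_eval, hs.1, hs.2, gradWedge]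
  ring

theorem gradWedge_eq_left :
    K.gradWedge y z y' z' = h / 2 * (p' * K.adjGrad y z y z + p * K.adjGrad y z y' z') := by
  unfold gradWedge adjGrad
  linear_combination
    K.gradY y z * K.gradZ_sub_gradZ y z y' z' - K.gradZ y z * K.gradY_sub_gradY y z y' z'
      + (K.b₂ * K.gradY y z - K.b₁ * K.gradZ y z) * hs.1
      + (K.b₃ * K.gradY y z - K.b₂ * K.gradZ y z) * hs.2

theorem gradWedge_eq_right :
    K.gradWedge y z y' z' = h / 2 * (p * K.adjGrad y' z' y' z' + p' * K.adjGrad y z y' z') := by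
  unfold gradWedge adjGrad
  linear_combination
    K.gradY y' z' * K.gradZ_sub_gradZ y z y' z' - K.gradZ y' z' * K.gradY_sub_gradY y z y' z'
      + (K.b₂ * K.gradY y' z' - K.b₁ * K.gradZ y' z') * hs.1
      + (K.b₃ * K.gradY y' z' - K.b₂ * K.gradZ y' z') * hs.2

theorem sub_mul_gradWedge :
    (p' - p) * K.gradWedge y z y' z' =
      h / 2 * (p' ^ 2 * K.adjGrad y z y z - p ^ 2 * K.adjGrad y' z' y' z') := by
  linear_combination p' * hs.gradWedge_eq_left - p * hs.gradWedge_eq_right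

theorem eval_sub_eval :
    K.eval y' z' - K.eval y z =
      h ^ 2 / 4 * K.D₁ * (p' ^ 2 * K.eval y z - p ^ 2 * K.eval y' z')
        - h ^ 2 / 8 * K.D₂ * (p' ^ 2 - p ^ 2) := by
  linear_combination hs.eval_sub_eval_eq_mul_gradWedge + h / 4 * hs.sub_mul_gradWedge
    + h ^ 2 / 8 * (p' ^ 2 * K.adjGrad_self y z - p ^ 2 * K.adjGrad_self y' z')

theorem modifiedEval_eq (hden : 1 + 1 / 4 * h ^ 2 * K.D₁ * p ^ 2 ≠ 0)
    (hden' : 1 + 1 / 4 * h ^ 2 * K.D₁ * p' ^ 2 ≠ 0) :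
    K.modifiedEval h p' y' z' = K.modifiedEval h p y z := by
  rw [modifiedEval, modifiedEval, div_eq_div_iff hden' hden]
  linear_combination hs.eval_sub_eval

end IsKahanStep

end PlanarQuadratic

theorem nambu_kahan_modified_K_general
    (a1 a2 a4 b1 b2 b3 b4 b5 h x y z x' y' z' : ℝ)
    (heq2 : y' - y = -(h * ((b2 * y + b3 * z + b5) * (a1 * x' + a2 * y' + a4)
      + (b2 * y' + b3 * z' + b5) * (a1 * x + a2 * y + a4)) / 2))
    (heq3 : z' - z = h * ((a1 * x + a2 * y + a4) * (b1 * y' + b2 * z' + b4)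
      + (a1 * x' + a2 * y' + a4) * (b1 * y + b2 * z + b4)) / 2)
    (hden : 1 + 1 / 4 * h ^ 2 * (b1 * b3 - b2 ^ 2) * (a1 * x + a2 * y + a4) ^ 2 ≠ 0)
    (hden' : 1 + 1 / 4 * h ^ 2 * (b1 * b3 - b2 ^ 2) * (a1 * x' + a2 * y' + a4) ^ 2 ≠ 0) :
    ((1 / 2 * b1 * y' ^ 2 + b2 * y' * z' + 1 / 2 * b3 * z' ^ 2 + b4 * y' + b5 * z')
        + 1 / 8 * h ^ 2 * (2 * b2 * b4 * b5 - b3 * b4 ^ 2 - b1 * b5 ^ 2)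
          * (a1 * x' + a2 * y' + a4) ^ 2)
      / (1 + 1 / 4 * h ^ 2 * (b1 * b3 - b2 ^ 2) * (a1 * x' + a2 * y' + a4) ^ 2)
    = ((1 / 2 * b1 * y ^ 2 + b2 * y * z + 1 / 2 * b3 * z ^ 2 + b4 * y + b5 * z)
        + 1 / 8 * h ^ 2 * (2 * b2 * b4 * b5 - b3 * b4 ^ 2 - b1 * b5 ^ 2)
          * (a1 * x + a2 * y + a4) ^ 2)
      / (1 + 1 / 4 * h ^ 2 * (b1 * b3 - b2 ^ 2) * (a1 * x + a2 * y + a4) ^ 2) :=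
  PlanarQuadratic.IsKahanStep.modifiedEval_eq (K := ⟨b1, b2, b3, b4, b5⟩) ⟨heq2, heq3⟩ hden hden'

/-- The Kahan discretization of the Nambu system also preserves the modified integral
`K̃ = (K + ⅛h²D₂(b)H_x²)/(1 + ¼h²D₁(b)H_x²)`. -/
theorem nambu_kahan_modified_K
    (a1 a2 a3 a4 a5 b1 b2 b3 b4 b5 h x y z x' y' z' : ℝ)
    (heq1 : x' - x = h * ((b2 * y + b3 * z + b5) * (a2 * x' + a3 * y' + a5)
      + (b2 * y' + b3 * z' + b5) * (a2 * x + a3 * y + a5)) / 2)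
    (heq2 : y' - y = -(h * ((b2 * y + b3 * z + b5) * (a1 * x' + a2 * y' + a4)
      + (b2 * y' + b3 * z' + b5) * (a1 * x + a2 * y + a4)) / 2))
    (heq3 : z' - z = h * ((a1 * x + a2 * y + a4) * (b1 * y' + b2 * z' + b4)
      + (a1 * x' + a2 * y' + a4) * (b1 * y + b2 * z + b4)) / 2)
    (hden : 1 + 1 / 4 * h ^ 2 * (b1 * b3 - b2 ^ 2) * (a1 * x + a2 * y + a4) ^ 2 ≠ 0)
    (hden' : 1 + 1 / 4 * h ^ 2 * (b1 * b3 - b2 ^ 2) * (a1 * x' + a2 * y' + a4) ^ 2 ≠ 0) :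
    ((1 / 2 * b1 * y' ^ 2 + b2 * y' * z' + 1 / 2 * b3 * z' ^ 2 + b4 * y' + b5 * z')
        + 1 / 8 * h ^ 2 * (2 * b2 * b4 * b5 - b3 * b4 ^ 2 - b1 * b5 ^ 2)
          * (a1 * x' + a2 * y' + a4) ^ 2)
      / (1 + 1 / 4 * h ^ 2 * (b1 * b3 - b2 ^ 2) * (a1 * x' + a2 * y' + a4) ^ 2)
    = ((1 / 2 * b1 * y ^ 2 + b2 * y * z + 1 / 2 * b3 * z ^ 2 + b4 * y + b5 * z)
        + 1 / 8 * h ^ 2 * (2 * b2 * b4 * b5 - b3 * b4 ^ 2 - b1 * b5 ^ 2)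
          * (a1 * x + a2 * y + a4) ^ 2)
      / (1 + 1 / 4 * h ^ 2 * (b1 * b3 - b2 ^ 2) * (a1 * x + a2 * y + a4) ^ 2) :=
  nambu_kahan_modified_K_general a1 a2 a4 b1 b2 b3 b4 b5 h x y z x' y' z' heq2 heq3 hden hden'
end

section
/- For the Nambu system ẋ = ∇H × ∇K with H(x,y), K(y,z) quadratic as above and D₁(a), D₂(a), D₁(b), D₂(b) nonzero where required, the density g(x,y,z) = (H(x,y) − D₂(a)/(2D₁(a)))⁻¹ · (K(y,z) − D₂(b)/(2D₁(b)))⁻¹ satisfies the continuous measure-preservation (Liouville) equation div(g·f) = 0, where f is the Nambu vector field. -/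
/-!
For a Nambu field `f = ∇H × ∇K` and any density of the form `g = φ(H) ψ(K)`, the product rule
splits `div (g f)` into `∇g · f + g div f`. The first term vanishes because `∇g` is a combination
of `∇H` and `∇K`, both orthogonal to `∇H × ∇K`; the second because mixed partial derivatives of
`H` and of `K` commute. The constants subtracted from `H` and `K` only shift `φ` and `ψ`.
-/

section NambuDensity

variable {φ ψ : ℝ → ℝ} {φ' ψ' : ℝ} {H K Hx Hy Ky Kz : ℝ → ℝ → ℝ} {Hxy Kyz x y z : ℝ}

/-- The mixed partials `Hxy` and `Kyz` are supplied in both orders, which is where the symmetry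
of second derivatives enters. -/
theorem nambu_density_divergence_eq_zero
    (hφ : HasDerivAt φ φ' (H x y)) (hψ : HasDerivAt ψ ψ' (K y z))
    (hHx : HasDerivAt (fun s => H s y) (Hx x y) x) (hHy : HasDerivAt (fun s => H x s) (Hy x y) y)
    (hKy : HasDerivAt (fun s => K s z) (Ky y z) y) (hKz : HasDerivAt (fun s => K y s) (Kz y z) z)
    (hHyx : HasDerivAt (fun s => Hy s y) Hxy x) (hHxy : HasDerivAt (fun s => Hx x s) Hxy y)
    (hKzy : HasDerivAt (fun s => Kz s z) Kyz y) (hKyz : HasDerivAt (fun s => Ky y s) Kyz z) :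
    deriv (fun s => φ (H s y) * ψ (K y z) * (Kz y z * Hy s y)) x
    + deriv (fun s => φ (H x s) * ψ (K s z) * -(Kz s z * Hx x s)) y
    + deriv (fun s => φ (H x y) * ψ (K y s) * (Hx x y * Ky y s)) z = 0 := by
  have dx : HasDerivAt (fun s => φ (H s y) * ψ (K y z) * (Kz y z * Hy s y)) _ x :=
    ((hφ.comp x hHx).mul_const _).mul (hHyx.const_mul _)
  have dy : HasDerivAt (fun s => φ (H x s) * ψ (K s z) * -(Kz s z * Hx x s)) _ y :=
    ((hφ.comp y hHy).mul (hψ.comp y hKy)).mul (hKzy.mul hHxy).neg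
  have dz : HasDerivAt (fun s => φ (H x y) * ψ (K y s) * (Hx x y * Ky y s)) _ z :=
    ((hψ.comp z hKz).const_mul _).mul (hKyz.const_mul _)
  rw [dx.deriv, dy.deriv, dz.deriv]
  simp only [Function.comp_apply, Pi.mul_apply]
  ring

end NambuDensity

section Quadratic

variable (c₁ c₂ c₃ c₄ c₅ u v : ℝ)

noncomputable def quadratic : ℝ :=
  1 / 2 * c₁ * u ^ 2 + c₂ * u * v + 1 / 2 * c₃ * v ^ 2 + c₄ * u + c₅ * v

theorem hasDerivAt_quadratic_fst :
    HasDerivAt (fun s => quadratic c₁ c₂ c₃ c₄ c₅ s v) (c₁ * u + c₂ * v + c₄) u := by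
  have h := (((((hasDerivAt_pow 2 u).const_mul (1 / 2 * c₁)).fun_add
    (((hasDerivAt_id' u).const_mul c₂).mul_const v)).add_const (1 / 2 * c₃ * v ^ 2)).fun_add
    ((hasDerivAt_id' u).const_mul c₄)).add_const (c₅ * v)
  refine h.congr_deriv ?_
  norm_num
  ring

theorem hasDerivAt_quadratic_snd :
    HasDerivAt (fun s => quadratic c₁ c₂ c₃ c₄ c₅ u s) (c₂ * u + c₃ * v + c₅) v := by
  have h := hasDerivAt_quadratic_fst c₃ c₂ c₁ c₅ c₄ v u
  simp only [quadratic] at h ⊢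
  convert h using 2 <;> ring

end Quadratic

theorem nambu_density_liouville_general
    (a1 a2 a3 a4 a5 b1 b2 b3 b4 b5 x y z : ℝ)
    (hH : (1 / 2 * a1 * x ^ 2 + a2 * x * y + 1 / 2 * a3 * y ^ 2 + a4 * x + a5 * y)
      - (2 * a2 * a4 * a5 - a3 * a4 ^ 2 - a1 * a5 ^ 2) / (2 * (a1 * a3 - a2 ^ 2)) ≠ 0)
    (hK : (1 / 2 * b1 * y ^ 2 + b2 * y * z + 1 / 2 * b3 * z ^ 2 + b4 * y + b5 * z)
      - (2 * b2 * b4 * b5 - b3 * b4 ^ 2 - b1 * b5 ^ 2) / (2 * (b1 * b3 - b2 ^ 2)) ≠ 0) :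
    deriv (fun s =>
        (((1 / 2 * a1 * s ^ 2 + a2 * s * y + 1 / 2 * a3 * y ^ 2 + a4 * s + a5 * y)
            - (2 * a2 * a4 * a5 - a3 * a4 ^ 2 - a1 * a5 ^ 2) / (2 * (a1 * a3 - a2 ^ 2)))⁻¹
          * ((1 / 2 * b1 * y ^ 2 + b2 * y * z + 1 / 2 * b3 * z ^ 2 + b4 * y + b5 * z)
            - (2 * b2 * b4 * b5 - b3 * b4 ^ 2 - b1 * b5 ^ 2) / (2 * (b1 * b3 - b2 ^ 2)))⁻¹)
          * ((b2 * y + b3 * z + b5) * (a2 * s + a3 * y + a5))) x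
    + deriv (fun s =>
        (((1 / 2 * a1 * x ^ 2 + a2 * x * s + 1 / 2 * a3 * s ^ 2 + a4 * x + a5 * s)
            - (2 * a2 * a4 * a5 - a3 * a4 ^ 2 - a1 * a5 ^ 2) / (2 * (a1 * a3 - a2 ^ 2)))⁻¹
          * ((1 / 2 * b1 * s ^ 2 + b2 * s * z + 1 / 2 * b3 * z ^ 2 + b4 * s + b5 * z)
            - (2 * b2 * b4 * b5 - b3 * b4 ^ 2 - b1 * b5 ^ 2) / (2 * (b1 * b3 - b2 ^ 2)))⁻¹)
          * (-((b2 * s + b3 * z + b5) * (a1 * x + a2 * s + a4)))) y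
    + deriv (fun s =>
        (((1 / 2 * a1 * x ^ 2 + a2 * x * y + 1 / 2 * a3 * y ^ 2 + a4 * x + a5 * y)
            - (2 * a2 * a4 * a5 - a3 * a4 ^ 2 - a1 * a5 ^ 2) / (2 * (a1 * a3 - a2 ^ 2)))⁻¹
          * ((1 / 2 * b1 * y ^ 2 + b2 * y * s + 1 / 2 * b3 * s ^ 2 + b4 * y + b5 * s)
            - (2 * b2 * b4 * b5 - b3 * b4 ^ 2 - b1 * b5 ^ 2) / (2 * (b1 * b3 - b2 ^ 2)))⁻¹)
          * ((a1 * x + a2 * y + a4) * (b1 * y + b2 * s + b4))) z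
    = 0 := by
  set cA := (2 * a2 * a4 * a5 - a3 * a4 ^ 2 - a1 * a5 ^ 2) / (2 * (a1 * a3 - a2 ^ 2))
  set cB := (2 * b2 * b4 * b5 - b3 * b4 ^ 2 - b1 * b5 ^ 2) / (2 * (b1 * b3 - b2 ^ 2))
  exact nambu_density_divergence_eq_zero (φ := fun t => (t - cA)⁻¹) (ψ := fun t => (t - cB)⁻¹)
    (H := quadratic a1 a2 a3 a4 a5) (K := quadratic b1 b2 b3 b4 b5)
    (Hx := fun u v => a1 * u + a2 * v + a4) (Hy := fun u v => a2 * u + a3 * v + a5)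
    (Ky := fun u v => b1 * u + b2 * v + b4) (Kz := fun u v => b2 * u + b3 * v + b5)
    (((hasDerivAt_id _).sub_const cA).inv hH) (((hasDerivAt_id _).sub_const cB).inv hK)
    (hasDerivAt_quadratic_fst ..) (hasDerivAt_quadratic_snd ..)
    (hasDerivAt_quadratic_fst ..) (hasDerivAt_quadratic_snd ..)
    ((((hasDerivAt_id' x).const_mul a2).add_const _).add_const _)
    ((((hasDerivAt_id' y).const_mul a2).const_add _).add_const _)
    ((((hasDerivAt_id' y).const_mul b2).add_const _).add_const _)
    ((((hasDerivAt_id' z).const_mul b2).const_add _).add_const _)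

/-- The density `g = (H − D₂(a)/(2D₁(a)))⁻¹ (K − D₂(b)/(2D₁(b)))⁻¹` satisfies the
continuous Liouville equation `div(g·f) = 0` for the Nambu vector field `f = ∇H × ∇K`,
on the set where the two factors are nonzero. -/
theorem nambu_density_liouville
    (a1 a2 a3 a4 a5 b1 b2 b3 b4 b5 x y z : ℝ)
    (hD1a : a1 * a3 - a2 ^ 2 ≠ 0)
    (hD1b : b1 * b3 - b2 ^ 2 ≠ 0)
    (hH : (1 / 2 * a1 * x ^ 2 + a2 * x * y + 1 / 2 * a3 * y ^ 2 + a4 * x + a5 * y)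
      - (2 * a2 * a4 * a5 - a3 * a4 ^ 2 - a1 * a5 ^ 2) / (2 * (a1 * a3 - a2 ^ 2)) ≠ 0)
    (hK : (1 / 2 * b1 * y ^ 2 + b2 * y * z + 1 / 2 * b3 * z ^ 2 + b4 * y + b5 * z)
      - (2 * b2 * b4 * b5 - b3 * b4 ^ 2 - b1 * b5 ^ 2) / (2 * (b1 * b3 - b2 ^ 2)) ≠ 0) :
    deriv (fun s =>
        (((1 / 2 * a1 * s ^ 2 + a2 * s * y + 1 / 2 * a3 * y ^ 2 + a4 * s + a5 * y)
            - (2 * a2 * a4 * a5 - a3 * a4 ^ 2 - a1 * a5 ^ 2) / (2 * (a1 * a3 - a2 ^ 2)))⁻¹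
          * ((1 / 2 * b1 * y ^ 2 + b2 * y * z + 1 / 2 * b3 * z ^ 2 + b4 * y + b5 * z)
            - (2 * b2 * b4 * b5 - b3 * b4 ^ 2 - b1 * b5 ^ 2) / (2 * (b1 * b3 - b2 ^ 2)))⁻¹)
          * ((b2 * y + b3 * z + b5) * (a2 * s + a3 * y + a5))) x
    + deriv (fun s =>
        (((1 / 2 * a1 * x ^ 2 + a2 * x * s + 1 / 2 * a3 * s ^ 2 + a4 * x + a5 * s)
            - (2 * a2 * a4 * a5 - a3 * a4 ^ 2 - a1 * a5 ^ 2) / (2 * (a1 * a3 - a2 ^ 2)))⁻¹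
          * ((1 / 2 * b1 * s ^ 2 + b2 * s * z + 1 / 2 * b3 * z ^ 2 + b4 * s + b5 * z)
            - (2 * b2 * b4 * b5 - b3 * b4 ^ 2 - b1 * b5 ^ 2) / (2 * (b1 * b3 - b2 ^ 2)))⁻¹)
          * (-((b2 * s + b3 * z + b5) * (a1 * x + a2 * s + a4)))) y
    + deriv (fun s =>
        (((1 / 2 * a1 * x ^ 2 + a2 * x * y + 1 / 2 * a3 * y ^ 2 + a4 * x + a5 * y)
            - (2 * a2 * a4 * a5 - a3 * a4 ^ 2 - a1 * a5 ^ 2) / (2 * (a1 * a3 - a2 ^ 2)))⁻¹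
          * ((1 / 2 * b1 * y ^ 2 + b2 * y * s + 1 / 2 * b3 * s ^ 2 + b4 * y + b5 * s)
            - (2 * b2 * b4 * b5 - b3 * b4 ^ 2 - b1 * b5 ^ 2) / (2 * (b1 * b3 - b2 ^ 2)))⁻¹)
          * ((a1 * x + a2 * y + a4) * (b1 * y + b2 * s + b4))) z
    = 0 :=
  nambu_density_liouville_general a1 a2 a3 a4 a5 b1 b2 b3 b4 b5 x y z hH hK
end

section
/- Let I(x₁,x₂) = ½a₁x₁² + a₂x₁x₂ + ½a₃x₂² + a₄x₁ + a₅x₂ with D₁ = a₁a₃ − a₂², D₂ = 2a₂a₄a₅ − a₃a₄² − a₁a₅², and suppose x₁' − x₁ = hE(𝐱)I₂' + hE(𝐱')I₂ and x₂' − x₂ = −hE(𝐱)I₁' − hE(𝐱')I₁ for some function E (Case 1, 'Kahan-like'). Then Î(𝐱) = (I(x₁,x₂) + ½h²D₂E(𝐱)²)/(1 + h²D₁E(𝐱)²) is preserved, i.e. Î(𝐱') = Î(𝐱), assuming both denominators 1 + h²D₁E(𝐱)² and 1 + h²D₁E(𝐱')² are nonzero. -/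
set_option maxHeartbeats 4000000


/-- Case 1 ("Kahan-like", weights `B = E(𝐱)`, `C = E(𝐱')`): the modified integral
`Î(𝐱) = (I(x₁,x₂) + ½h²D₂E(𝐱)²)/(1 + h²D₁E(𝐱)²)` is preserved. -/
theorem kahan_like_modified_integral
    {n : ℕ} (a1 a2 a3 a4 a5 h : ℝ)
    (E : (Fin n → ℝ) → ℝ) (X X' : Fin n → ℝ) (x1 x2 x1' x2' : ℝ)
    (hx1 : 2 ≤ n) (hc1 : x1 = X ⟨0, by omega⟩) (hc2 : x2 = X ⟨1, by omega⟩)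
    (hc1' : x1' = X' ⟨0, by omega⟩) (hc2' : x2' = X' ⟨1, by omega⟩)
    (heq1 : x1' - x1 = h * E X * (a2 * x1' + a3 * x2' + a5)
      + h * E X' * (a2 * x1 + a3 * x2 + a5))
    (heq2 : x2' - x2 = -(h * E X * (a1 * x1' + a2 * x2' + a4))
      - h * E X' * (a1 * x1 + a2 * x2 + a4))
    (hden : 1 + h ^ 2 * (a1 * a3 - a2 ^ 2) * (E X) ^ 2 ≠ 0)
    (hden' : 1 + h ^ 2 * (a1 * a3 - a2 ^ 2) * (E X') ^ 2 ≠ 0) :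
    ((1 / 2 * a1 * x1' ^ 2 + a2 * x1' * x2' + 1 / 2 * a3 * x2' ^ 2 + a4 * x1' + a5 * x2')
        + 1 / 2 * h ^ 2 * (2 * a2 * a4 * a5 - a3 * a4 ^ 2 - a1 * a5 ^ 2) * (E X') ^ 2)
      / (1 + h ^ 2 * (a1 * a3 - a2 ^ 2) * (E X') ^ 2)
    = ((1 / 2 * a1 * x1 ^ 2 + a2 * x1 * x2 + 1 / 2 * a3 * x2 ^ 2 + a4 * x1 + a5 * x2)
        + 1 / 2 * h ^ 2 * (2 * a2 * a4 * a5 - a3 * a4 ^ 2 - a1 * a5 ^ 2) * (E X) ^ 2)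
      / (1 + h ^ 2 * (a1 * a3 - a2 ^ 2) * (E X) ^ 2) := by
  set b := h * E X with hb
  set c := h * E X' with hc
  have hΔ : (1 : ℝ) + b ^ 2 * (a1 * a3 - a2 ^ 2) ≠ 0 := by
    intro hz; apply hden; rw [hb] at hz; nlinarith [hz]
  have h1 : x1' * (1 + b ^ 2 * (a1 * a3 - a2 ^ 2))
      = (1 + b * a2) * (x1 + b * a5 + c * (a2 * x1 + a3 * x2 + a5))
        + b * a3 * (x2 - b * a4 - c * (a1 * x1 + a2 * x2 + a4)) := by
    linear_combination (1 + b * a2) * heq1 + b * a3 * heq2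
  have h2 : x2' * (1 + b ^ 2 * (a1 * a3 - a2 ^ 2))
      = (1 - b * a2) * (x2 - b * a4 - c * (a1 * x1 + a2 * x2 + a4))
        - b * a1 * (x1 + b * a5 + c * (a2 * x1 + a3 * x2 + a5)) := by
    linear_combination (-(b * a1)) * heq1 + (1 - b * a2) * heq2
  have hx1'' : x1' = ((1 + b * a2) * (x1 + b * a5 + c * (a2 * x1 + a3 * x2 + a5))
        + b * a3 * (x2 - b * a4 - c * (a1 * x1 + a2 * x2 + a4)))
      / (1 + b ^ 2 * (a1 * a3 - a2 ^ 2)) := by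
    rw [eq_div_iff hΔ]; exact h1
  have hx2'' : x2' = ((1 - b * a2) * (x2 - b * a4 - c * (a1 * x1 + a2 * x2 + a4))
        - b * a1 * (x1 + b * a5 + c * (a2 * x1 + a3 * x2 + a5)))
      / (1 + b ^ 2 * (a1 * a3 - a2 ^ 2)) := by
    rw [eq_div_iff hΔ]; exact h2
  have hd : (1 : ℝ) + h ^ 2 * (a1 * a3 - a2 ^ 2) * E X ^ 2 = 1 + b ^ 2 * (a1 * a3 - a2 ^ 2) := by
    rw [hb]; ring
  have hd' : (1 : ℝ) + h ^ 2 * (a1 * a3 - a2 ^ 2) * E X' ^ 2 = 1 + c ^ 2 * (a1 * a3 - a2 ^ 2) → True := fun _ => trivial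
  have hden2 : (1 : ℝ) + h ^ 2 * (a1 * a3 - a2 ^ 2) * E X' ^ 2 ≠ 0 := hden'
  rw [hx1'', hx2'']
  rw [div_eq_div_iff hden2 hden]
  field_simp
  ring
end

section
/- Let I(x₁,x₂) = ½a₁x₁² + a₂x₁x₂ + ½a₃x₂² + a₄x₁ + a₅x₂ with D₁ = a₁a₃ − a₂², D₂ = 2a₂a₄a₅ − a₃a₄² − a₁a₅². Suppose x₁' − x₁ = h(F(𝐱')I₂' + F(𝐱)I₂) and x₂' − x₂ = −h(F(𝐱')I₁' + F(𝐱)I₁) (Case 2, 'trapezoidal-like'). Then the quantity Î(𝐱) = I(x₁,x₂) + h²F(𝐱)²(D₁I(x₁,x₂) − ½D₂) is preserved: Î(𝐱') = Î(𝐱). -/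
/-!
Write `g = ∇I(𝐱)`, `g' = ∇I(𝐱')`, `B = F(𝐱')`, `C = F(𝐱)` and `w = B g' + C g`; the step is
`𝐱' - 𝐱 = h J w` with `J(u₁, u₂) = (u₂, -u₁)`. Since `I` is quadratic the midpoint rule is exact,
`I(𝐱') - I(𝐱) = ⟨(g + g')/2, 𝐱' - 𝐱⟩ = (h/2)(B - C)(g × g')`. As `g' - g = A(𝐱' - 𝐱)` for the
Hessian `A` and `J A J = -adj A`, also `g × g' = -h ⟨g, adj A w⟩ = -h ⟨g', adj A w⟩`, whence
`I(𝐱') - I(𝐱) = -(h²/2)(B² Q(g') - C² Q(g))` for `Q(u) = ⟨u, adj A u⟩`. Finally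
`Q(∇I) = 2 D₁ I - D₂` identically.
-/

structure PlaneQuadratic (K : Type*) where
  (a1 a2 a3 a4 a5 : K)

namespace PlaneQuadratic

section CommRing

variable {K : Type*} [CommRing K] (P : PlaneQuadratic K)

def grad1 (x1 x2 : K) : K := P.a1 * x1 + P.a2 * x2 + P.a4

def grad2 (x1 x2 : K) : K := P.a2 * x1 + P.a3 * x2 + P.a5

def D1 : K := P.a1 * P.a3 - P.a2 ^ 2

def D2 : K := 2 * P.a2 * P.a4 * P.a5 - P.a3 * P.a4 ^ 2 - P.a1 * P.a5 ^ 2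

/-- The symmetric bilinear form of the adjugate `[[a3, -a2], [-a2, a1]]` of the Hessian. -/
def adjForm (u1 u2 v1 v2 : K) : K := P.a3 * u1 * v1 - P.a2 * (u1 * v2 + u2 * v1) + P.a1 * u2 * v2

def IsTrapezoidalStep (h B C x1 x2 x1' x2' : K) : Prop :=
  x1' - x1 = h * (B * P.grad2 x1' x2' + C * P.grad2 x1 x2) ∧
    x2' - x2 = -(h * (B * P.grad1 x1' x2' + C * P.grad1 x1 x2))

variable {P} {h B C x1 x2 x1' x2' : K}

/-- The rotated gradient increment is `J A (𝐱' - 𝐱) = h J A J w = -h adj(A) w`. -/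
theorem IsTrapezoidalStep.cross_grad_sub (hs : P.IsTrapezoidalStep h B C x1 x2 x1' x2')
    (u1 u2 : K) :
    u1 * (P.grad2 x1' x2' - P.grad2 x1 x2) - u2 * (P.grad1 x1' x2' - P.grad1 x1 x2) =
      -h * P.adjForm u1 u2
        (B * P.grad1 x1' x2' + C * P.grad1 x1 x2) (B * P.grad2 x1' x2' + C * P.grad2 x1 x2) := by
  obtain ⟨hs1, hs2⟩ := hs
  unfold adjForm grad1 grad2 at *
  linear_combination (P.a2 * u1 - P.a1 * u2) * hs1 + (P.a3 * u1 - P.a2 * u2) * hs2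

end CommRing

section Field

variable {K : Type*} [Field K] (P : PlaneQuadratic K)

def eval (x1 x2 : K) : K :=
  1 / 2 * P.a1 * x1 ^ 2 + P.a2 * x1 * x2 + 1 / 2 * P.a3 * x2 ^ 2 + P.a4 * x1 + P.a5 * x2

/-- `Î(𝐱)`, with the value `F(𝐱)` passed as `c`. -/
def modified (h c x1 x2 : K) : K :=
  P.eval x1 x2 + h ^ 2 * c ^ 2 * (P.D1 * P.eval x1 x2 - 1 / 2 * P.D2)

variable [CharZero K]

theorem eval_sub_eval (x1 x2 x1' x2' : K) :
    P.eval x1' x2' - P.eval x1 x2 =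
      ((P.grad1 x1 x2 + P.grad1 x1' x2') * (x1' - x1)
        + (P.grad2 x1 x2 + P.grad2 x1' x2') * (x2' - x2)) / 2 := by
  unfold eval grad1 grad2
  ring

theorem D1_mul_eval_sub_half_D2 (x1 x2 : K) :
    P.D1 * P.eval x1 x2 - 1 / 2 * P.D2 =
      1 / 2 * P.adjForm (P.grad1 x1 x2) (P.grad2 x1 x2) (P.grad1 x1 x2) (P.grad2 x1 x2) := by
  unfold D1 D2 eval adjForm grad1 grad2
  ring

variable {P} {h B C x1 x2 x1' x2' : K}

theorem IsTrapezoidalStep.eval_sub_eval (hs : P.IsTrapezoidalStep h B C x1 x2 x1' x2') :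
    P.eval x1' x2' - P.eval x1 x2 =
      h / 2 * (B - C) * (P.grad1 x1 x2 * P.grad2 x1' x2' - P.grad2 x1 x2 * P.grad1 x1' x2') := by
  obtain ⟨hs1, hs2⟩ := hs
  rw [P.eval_sub_eval, hs1, hs2]
  ring

theorem IsTrapezoidalStep.modified_eq (hs : P.IsTrapezoidalStep h B C x1 x2 x1' x2') :
    P.modified h B x1' x2' = P.modified h C x1 x2 := by
  have hcross := hs.cross_grad_sub (P.grad1 x1 x2) (P.grad2 x1 x2)
  have hcross' := hs.cross_grad_sub (P.grad1 x1' x2') (P.grad2 x1' x2')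
  unfold modified
  rw [D1_mul_eval_sub_half_D2, D1_mul_eval_sub_half_D2]
  unfold adjForm at hcross hcross' ⊢
  linear_combination hs.eval_sub_eval + h / 2 * B * hcross' - h / 2 * C * hcross

end Field

end PlaneQuadratic

/-- Case 2 ("trapezoidal-like", weights `B = F(𝐱')`, `C = F(𝐱)`): the quantity
`Î(𝐱) = I(x₁,x₂) + h²F(𝐱)²(D₁I(x₁,x₂) − ½D₂)` is preserved. -/
theorem trapezoidal_like_modified_integral
    {n : ℕ} (a1 a2 a3 a4 a5 h : ℝ)
    (F : (Fin n → ℝ) → ℝ) (X X' : Fin n → ℝ) (x1 x2 x1' x2' : ℝ)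
    (heq1 : x1' - x1 = h * (F X' * (a2 * x1' + a3 * x2' + a5)
      + F X * (a2 * x1 + a3 * x2 + a5)))
    (heq2 : x2' - x2 = -(h * (F X' * (a1 * x1' + a2 * x2' + a4)
      + F X * (a1 * x1 + a2 * x2 + a4)))) :
    (1 / 2 * a1 * x1' ^ 2 + a2 * x1' * x2' + 1 / 2 * a3 * x2' ^ 2 + a4 * x1' + a5 * x2')
      + h ^ 2 * (F X') ^ 2 * ((a1 * a3 - a2 ^ 2)
          * (1 / 2 * a1 * x1' ^ 2 + a2 * x1' * x2' + 1 / 2 * a3 * x2' ^ 2 + a4 * x1' + a5 * x2')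
        - 1 / 2 * (2 * a2 * a4 * a5 - a3 * a4 ^ 2 - a1 * a5 ^ 2))
    = (1 / 2 * a1 * x1 ^ 2 + a2 * x1 * x2 + 1 / 2 * a3 * x2 ^ 2 + a4 * x1 + a5 * x2)
      + h ^ 2 * (F X) ^ 2 * ((a1 * a3 - a2 ^ 2)
          * (1 / 2 * a1 * x1 ^ 2 + a2 * x1 * x2 + 1 / 2 * a3 * x2 ^ 2 + a4 * x1 + a5 * x2)
        - 1 / 2 * (2 * a2 * a4 * a5 - a3 * a4 ^ 2 - a1 * a5 ^ 2)) :=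
  PlaneQuadratic.IsTrapezoidalStep.modified_eq (P := ⟨a1, a2, a3, a4, a5⟩) ⟨heq1, heq2⟩
end
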